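/- Let A be a finite subset of ZMod d × ZMod d with card A = a, such that the coherent states {D(j)s : j ∈ A} are linearly independent. Then (1) for every linear operator θ on ℂ^d, the sum over all i ∈ ZMod d × ZMod d of Tr(θ ∘ Π(A + i)) equals d · a · Tr θ; and (2) if θ = ∑_{i ∈ ZMod d × ZMod d} c_i · Π(A + i) for complex coefficients c_i, then Tr θ = a · ∑_i c_i. -/

import Mathlib

open scoped Matrix ComplexOrder

noncomputable section

/-- `ω(r) = exp(2πi r / d)` for `r ∈ ZMod d`. -/
def omg (d : ℕ) (r : ZMod d) : ℂ := Complex.exp (2 * Real.pi * Complex.I * r.val / d)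

/-- The matrix `Z` with `Z|m⟩ = ω(m)|m⟩`. -/
def Zmat (d : ℕ) [Fact d.Prime] : Matrix (ZMod d) (ZMod d) ℂ :=
  Matrix.diagonal fun m => omg d m

/-- The matrix `X` with `X|m⟩ = |m+1⟩`. -/
def Xmat (d : ℕ) [Fact d.Prime] : Matrix (ZMod d) (ZMod d) ℂ :=
  Matrix.of fun m n => if m = n + 1 then 1 else 0

/-- The displacement operator `D(α,β) = ω(-2⁻¹αβ) Z^α X^β` as a matrix. -/
def Dmat (d : ℕ) [Fact d.Prime] (i : ZMod d × ZMod d) : Matrix (ZMod d) (ZMod d) ℂ :=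
  omg d (-(2⁻¹ * i.1 * i.2)) • (Zmat d ^ (i.1).val * Xmat d ^ (i.2).val)

/-- The displacement operator `D(i)` as a linear endomorphism of `ℂ^d`. -/
def Dlin (d : ℕ) [Fact d.Prime] (i : ZMod d × ZMod d) :
    EuclideanSpace ℂ (ZMod d) →ₗ[ℂ] EuclideanSpace ℂ (ZMod d) :=
  Matrix.toEuclideanLin (Dmat d i)

/-- The coherent subspace `H(A)`: the span of the coherent states `D(j)s`, `j ∈ A`. -/
def Hsub (d : ℕ) [Fact d.Prime] (s : EuclideanSpace ℂ (ZMod d))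
    (A : Finset (ZMod d × ZMod d)) : Submodule ℂ (EuclideanSpace ℂ (ZMod d)) :=
  Submodule.span ℂ ((fun j => Dlin d j s) '' ↑A)

/-- The coherent projector `Π(A)`: the orthogonal projection of `ℂ^d` onto `H(A)`,
as a linear endomorphism of `ℂ^d`. -/
def Proj (d : ℕ) [Fact d.Prime] (s : EuclideanSpace ℂ (ZMod d))
    (A : Finset (ZMod d × ZMod d)) :
    EuclideanSpace ℂ (ZMod d) →ₗ[ℂ] EuclideanSpace ℂ (ZMod d) :=
  (Hsub d s A).subtype ∘ₗ (Submodule.orthogonalProjection (Hsub d s A)).toLinearMap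

set_option linter.unusedSectionVars false

variable (d : ℕ) [Fact d.Prime]

lemma omg_natCast (n : ℕ) : omg d (n : ZMod d) = Complex.exp (2 * Real.pi * Complex.I * n / d) := by
  have hd : (d : ℂ) ≠ 0 := by
    exact_mod_cast Nat.Prime.ne_zero (Fact.out (p := d.Prime))
  unfold omg
  rw [ZMod.val_natCast]
  conv_rhs => rw [show (n : ℂ) = (n % d : ℕ) + d * (n / d : ℕ) by
    norm_cast; exact (Nat.mod_add_div n d).symm]
  rw [mul_add, add_div, Complex.exp_add]
  set q : ℕ := n / d with hq
  have : 2 * Real.pi * Complex.I * ((d : ℂ) * (q : ℂ)) / d = ((q : ℤ) : ℂ) * (2 * Real.pi * Complex.I) := by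
    rw [mul_div_assoc, mul_comm (d:ℂ) (q:ℂ), mul_div_assoc, div_self hd, mul_one]
    push_cast; ring
  rw [this, Complex.exp_int_mul_two_pi_mul_I, mul_one]

lemma omg_zero : omg d (0 : ZMod d) = 1 := by
  simp [omg]

lemma omg_add (r t : ZMod d) : omg d (r + t) = omg d r * omg d t := by
  have : NeZero d := ⟨Nat.Prime.ne_zero Fact.out⟩
  have h : r + t = ((r.val + t.val : ℕ) : ZMod d) := by push_cast [ZMod.natCast_val]; simp [ZMod.natCast_val]
  rw [h, omg_natCast]
  unfold omg
  rw [← Complex.exp_add]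
  congr 1
  push_cast
  ring

lemma omg_ne_zero (r : ZMod d) : omg d r ≠ 0 := Complex.exp_ne_zero _

lemma omg_neg (r : ZMod d) : omg d (-r) = (omg d r)⁻¹ := by
  refine eq_inv_of_mul_eq_one_left ?_
  rw [← omg_add]; simp [omg_zero]

lemma omg_pow (r : ZMod d) (k : ℕ) : omg d r ^ k = omg d ((k : ZMod d) * r) := by
  induction k with
  | zero => simp [omg_zero]
  | succ n ih => rw [pow_succ, ih, ← omg_add]; push_cast; ring_nf

lemma omg_star (r : ZMod d) : (starRingEnd ℂ) (omg d r) = omg d (-r) := by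
  rw [omg_neg]
  unfold omg
  rw [← Complex.exp_conj, ← Complex.exp_neg]
  congr 1
  simp only [map_neg, map_div₀, map_mul, Complex.conj_I, Complex.conj_ofReal, Complex.conj_natCast, map_ofNat]
  ring




lemma Xmat_pow (k : ℕ) : Xmat d ^ k = Matrix.of fun m n => if m = n + (k : ZMod d) then 1 else 0 := by
  induction k with
  | zero => ext m n; by_cases h : m = n <;> simp [Matrix.one_apply, h]
  | succ k ih =>
    rw [pow_succ, ih]
    ext m n
    rw [Matrix.mul_apply]
    rw [Finset.sum_eq_single (n+1)]
    · push_cast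
      by_cases h : m = n + ((k:ZMod d) + 1) <;>
        simp [Matrix.of_apply, Xmat, h, add_comm, add_assoc, add_left_comm]
    · intro b _ hb
      rw [show Xmat d b n = 0 from by simp [Xmat, hb], mul_zero]
    · simp

lemma Zmat_pow (k : ℕ) : Zmat d ^ k = Matrix.diagonal fun m => omg d ((k : ZMod d) * m) := by
  rw [Zmat, Matrix.diagonal_pow]
  ext m n
  by_cases h : m = n
  · subst h; simp [Matrix.diagonal_apply_eq, omg_pow]
  · simp [Matrix.diagonal_apply_ne _ h]

lemma Dmat_apply (i : ZMod d × ZMod d) (m n : ZMod d) :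
    Dmat d i m n = if n = m - i.2 then omg d (-(2⁻¹ * i.1 * i.2) + i.1 * m) else 0 := by
  have : NeZero d := ⟨Nat.Prime.ne_zero Fact.out⟩
  rw [Dmat, Matrix.smul_apply, Matrix.mul_apply]
  rw [Zmat_pow, Xmat_pow]
  rw [Finset.sum_eq_single m]
  · simp only [Matrix.diagonal_apply_eq, Matrix.of_apply, ZMod.natCast_val, ZMod.cast_id]
    by_cases h : n = m - i.2
    · have h' : m = n + i.2 := by rw [h]; ring
      rw [if_pos h', if_pos h, mul_one, smul_eq_mul, ← omg_add]
    · have h' : ¬ (m = n + i.2) := by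
        intro hc; exact h (by rw [hc]; ring)
      rw [if_neg h', if_neg h, mul_zero, smul_eq_mul, mul_zero]
  · intro b _ hb
    simp [Matrix.diagonal_apply_ne _ (Ne.symm hb)]
  · simp

lemma Dmat_conj_apply (i : ZMod d × ZMod d) (m n : ZMod d) :
    (Dmat d i)ᴴ m n = if n = m + i.2 then omg d (2⁻¹ * i.1 * i.2 - i.1 * n) else 0 := by
  rw [Matrix.conjTranspose_apply, Dmat_apply]
  by_cases h : m = n - i.2
  · have h' : n = m + i.2 := by rw [h]; ring
    rw [if_pos h, if_pos h', RCLike.star_def, omg_star]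
    congr 1; ring
  · have h' : ¬ (n = m + i.2) := fun hc => h (by rw [hc]; ring)
    rw [if_neg h, if_neg h', star_zero]

lemma Dmat_mul_conjTranspose (i : ZMod d × ZMod d) :
    Dmat d i * (Dmat d i)ᴴ = 1 := by
  ext m n
  rw [Matrix.mul_apply, Finset.sum_eq_single (m - i.2)]
  · rw [Dmat_apply, Dmat_conj_apply, if_pos rfl]
    rw [show (m - i.2 + i.2) = m by ring]
    by_cases h : n = m
    · subst h
      rw [if_pos rfl, ← omg_add, Matrix.one_apply_eq]
      rw [show -(2⁻¹ * i.1 * i.2) + i.1 * n + (2⁻¹ * i.1 * i.2 - i.1 * n) = 0 by ring, omg_zero]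
    · rw [if_neg h, mul_zero, Matrix.one_apply_ne (fun hc => h hc.symm)]
  · intro b _ hb
    rw [Dmat_apply, if_neg hb, zero_mul]
  · simp

lemma omg_total : ∑ r : ZMod d, omg d r = 0 := by
  have : NeZero d := ⟨Nat.Prime.ne_zero Fact.out⟩
  have hd2 : 2 ≤ d := Nat.Prime.two_le Fact.out
  have key : omg d 1 * ∑ r : ZMod d, omg d r = ∑ r : ZMod d, omg d r := by
    rw [Finset.mul_sum]
    exact Fintype.sum_equiv (Equiv.addRight 1) _ _ (fun r => by
      rw [← omg_add, Equiv.coe_addRight, add_comm])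
  have hne : omg d 1 ≠ 1 := by
    have hval : ((1 : ZMod d)).val = 1 := ZMod.val_one d
    unfold omg
    rw [hval]
    intro hc
    rw [Complex.exp_eq_one_iff] at hc
    obtain ⟨k, hk⟩ := hc
    have hd0 : (d : ℂ) ≠ 0 := by exact_mod_cast (Nat.Prime.ne_zero Fact.out : d ≠ 0)
    have hI : (2 * Real.pi * Complex.I : ℂ) ≠ 0 := by
      simp [Real.pi_ne_zero, Complex.I_ne_zero]
    have h1 : (1 : ℂ) = (k : ℂ) * d := by
      push_cast at hk
      field_simp at hk
      apply mul_left_cancel₀ hI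
      linear_combination (2 * Real.pi * Complex.I) * hk
    have h2 : ((k * d : ℤ) : ℂ) = ((1 : ℤ) : ℂ) := by push_cast; rw [← h1]
    have h3 : (k * d : ℤ) = 1 := by exact_mod_cast h2
    have h4 : (d : ℤ) ∣ 1 := Dvd.intro_left k h3
    have h5 : (d : ℤ) ≤ 1 := Int.le_of_dvd one_pos h4
    omega
  have hz : (omg d 1 - 1) * (∑ r : ZMod d, omg d r) = 0 := by
    rw [sub_mul, one_mul, key, sub_self]
  rcases mul_eq_zero.mp hz with h | h
  · exact absurd (sub_eq_zero.mp h) hne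
  · exact h

lemma omg_sum (c : ZMod d) :
    ∑ α : ZMod d, omg d (α * c) = if c = 0 then (d : ℂ) else 0 := by
  by_cases h : c = 0
  · simp [h, omg_zero, Finset.card_univ]
  · rw [if_neg h]
    haveI : Fact (Nat.Prime d) := inferInstance
    have := (Fact.out : Nat.Prime d)
    letI := ZMod.instField d
    have hbij : Function.Bijective (fun α : ZMod d => α * c) :=
      (Equiv.mulRight₀ c h).bijective
    exact (Function.Bijective.sum_comp hbij (fun r => omg d r)).trans (omg_total d)

lemma two_inv_mul_two (hodd : Odd d) : (2⁻¹ : ZMod d) * 2 = 1 := by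
  have : NeZero d := ⟨Nat.Prime.ne_zero Fact.out⟩
  have h2 : (2 : ZMod d) ≠ 0 := by
    intro hc
    have : d ∣ 2 := by
      have := (ZMod.natCast_eq_zero_iff 2 d).mp (by exact_mod_cast hc)
      exact this
    have hd2 : d = 2 := ((Nat.prime_dvd_prime_iff_eq Fact.out Nat.prime_two).mp this)
    rw [hd2] at hodd
    exact (Nat.not_odd_iff_even.mpr (by decide)) hodd
  exact inv_mul_cancel₀ h2

lemma Dmat_weyl (hodd : Odd d) (i j : ZMod d × ZMod d) :
    Dmat d i * Dmat d j = omg d (2⁻¹ * (i.1 * j.2 - i.2 * j.1)) • Dmat d (i + j) := by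
  have h2 := two_inv_mul_two d hodd
  ext m n
  rw [Matrix.mul_apply, Finset.sum_eq_single (m - i.2)]
  · rw [Dmat_apply, if_pos rfl, Dmat_apply, Matrix.smul_apply, Dmat_apply]
    have hc : (m - i.2 - j.2) = m - (i + j).2 := by simp [sub_sub]
    by_cases h : n = m - i.2 - j.2
    · rw [if_pos h, if_pos (by rw [← hc]; exact h), smul_eq_mul,
        ← omg_add, ← omg_add]
      congr 1
      simp only [Prod.fst_add, Prod.snd_add]
      linear_combination (i.2 * j.1) * h2
    · rw [if_neg h, if_neg (by rw [← hc]; exact h), mul_zero, smul_zero]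
  · intro b _ hb
    rw [Dmat_apply, if_neg hb, zero_mul]
  · simp

lemma Dmat_conj_sum (M : Matrix (ZMod d) (ZMod d) ℂ) :
    ∑ i : ZMod d × ZMod d, Dmat d i * M * (Dmat d i)ᴴ = ((d : ℂ) * M.trace) • 1 := by
  ext m n
  rw [Matrix.sum_apply]
  have key : ∀ i : ZMod d × ZMod d,
      (Dmat d i * M * (Dmat d i)ᴴ) m n = omg d (i.1 * (m - n)) * M (m - i.2) (n - i.2) := by
    intro i
    rw [Matrix.mul_apply, Finset.sum_eq_single (n - i.2)]
    · rw [Dmat_conj_apply, if_pos (by ring), Matrix.mul_apply, Finset.sum_eq_single (m - i.2)]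
      · rw [Dmat_apply, if_pos rfl, mul_right_comm, ← omg_add]
        congr 2
        ring
      · intro b _ hb
        rw [Dmat_apply, if_neg hb, zero_mul]
      · simp
    · intro b _ hb
      rw [Dmat_conj_apply, if_neg (fun hc => hb (by rw [hc]; ring)), mul_zero]
    · simp
  rw [Finset.sum_congr rfl (fun i _ => key i), Fintype.sum_prod_type]
  simp_rw [← Finset.mul_sum]
  rw [← Finset.sum_mul, omg_sum]
  by_cases h : m = n
  · subst h
    rw [if_pos (sub_self m), Matrix.smul_apply, Matrix.one_apply_eq, smul_eq_mul, mul_one]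
    congr 1
    exact Fintype.sum_equiv (Equiv.subLeft m) _ _ (fun b => by simp [Matrix.trace, Matrix.diag])
  · rw [if_neg (sub_ne_zero.mpr h), zero_mul, Matrix.smul_apply,
      Matrix.one_apply_ne h, smul_eq_mul, mul_zero]




lemma toEuclideanLin_comp (M N : Matrix (ZMod d) (ZMod d) ℂ) :
    Matrix.toEuclideanLin (M * N) = Matrix.toEuclideanLin M ∘ₗ Matrix.toEuclideanLin N := by
  rw [Matrix.toEuclideanLin_eq_toLin, Matrix.toLin_mul _ (PiLp.basisFun 2 ℂ (ZMod d)) _]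

lemma trace_toEuclideanLin (M : Matrix (ZMod d) (ZMod d) ℂ) :
    LinearMap.trace ℂ (EuclideanSpace ℂ (ZMod d)) (Matrix.toEuclideanLin M) = M.trace := by
  rw [Matrix.toEuclideanLin_eq_toLin,
    LinearMap.trace_eq_matrix_trace ℂ (PiLp.basisFun 2 ℂ (ZMod d)), LinearMap.toMatrix_toLin]

lemma Dlin_adjoint (i : ZMod d × ZMod d) :
    LinearMap.adjoint (Dlin d i) = Matrix.toEuclideanLin (Dmat d i)ᴴ :=
  (Matrix.toEuclideanLin_conjTranspose_eq_adjoint _).symm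

lemma Dlin_comp_adjoint (i : ZMod d × ZMod d) :
    Dlin d i ∘ₗ LinearMap.adjoint (Dlin d i) = LinearMap.id := by
  rw [Dlin_adjoint, Dlin, ← toEuclideanLin_comp, Dmat_mul_conjTranspose]
  rw [Matrix.toEuclideanLin_eq_toLin, Matrix.toLin_one]

lemma adjoint_comp_Dlin (i : ZMod d × ZMod d) :
    LinearMap.adjoint (Dlin d i) ∘ₗ Dlin d i = LinearMap.id := by
  rw [Dlin_adjoint, Dlin, ← toEuclideanLin_comp,
    mul_eq_one_comm.mp (Dmat_mul_conjTranspose d i)]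
  rw [Matrix.toEuclideanLin_eq_toLin, Matrix.toLin_one]

open scoped InnerProductSpace in
lemma proj_map {E : Type*} [NormedAddCommGroup E] [InnerProductSpace ℂ E]
    [FiniteDimensional ℂ E] (U : E →ₗ[ℂ] E)
    (h1 : LinearMap.adjoint U ∘ₗ U = LinearMap.id) (K : Submodule ℂ E) :
    (K.map U).subtype ∘ₗ (Submodule.orthogonalProjection (K.map U)).toLinearMap
      = U ∘ₗ ((K.subtype ∘ₗ (Submodule.orthogonalProjection K).toLinearMap) ∘ₗ LinearMap.adjoint U) := by
  have h1' : ∀ y, LinearMap.adjoint U (U y) = y := fun y => by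
    have := LinearMap.ext_iff.mp h1 y
    simpa using this
  ext x
  simp only [LinearMap.comp_apply, Submodule.subtype_apply, ContinuousLinearMap.coe_coe]
  apply Submodule.eq_starProjection_of_mem_of_inner_eq_zero
  · exact Submodule.mem_map_of_mem (Submodule.orthogonalProjection K (LinearMap.adjoint U x)).2
  · rintro w ⟨k, hk, rfl⟩
    have hUk : ∀ y : E, ⟪U y, U k⟫_ℂ = ⟪y, k⟫_ℂ := fun y => by
      rw [← LinearMap.adjoint_inner_left, h1']
    rw [inner_sub_left, ← LinearMap.adjoint_inner_left, hUk, ← inner_sub_left]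
    exact Submodule.starProjection_inner_eq_zero _ _ hk

lemma Dlin_weyl (hodd : Odd d) (i j : ZMod d × ZMod d) :
    Dlin d i ∘ₗ Dlin d j = omg d (2⁻¹ * (i.1 * j.2 - i.2 * j.1)) • Dlin d (i + j) := by
  rw [Dlin, Dlin, Dlin, ← toEuclideanLin_comp, Dmat_weyl d hodd, map_smul]

lemma Hsub_translate (hodd : Odd d) (s : EuclideanSpace ℂ (ZMod d))
    (A : Finset (ZMod d × ZMod d)) (i : ZMod d × ZMod d) :
    Hsub d s (A.image (· + i)) = (Hsub d s A).map (Dlin d i) := by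
  unfold Hsub
  rw [Submodule.map_span, ← Set.image_comp]
  apply le_antisymm <;> rw [Submodule.span_le]
  · rintro x ⟨j, hj, rfl⟩
    obtain ⟨j₀, hj₀, rfl⟩ := Finset.mem_image.mp (by exact_mod_cast hj)
    have hw := LinearMap.ext_iff.mp (Dlin_weyl d hodd i j₀) s
    simp only [LinearMap.comp_apply, LinearMap.smul_apply] at hw
    have : Dlin d (j₀ + i) s
        = (omg d (2⁻¹ * (i.1 * j₀.2 - i.2 * j₀.1)))⁻¹ • Dlin d i (Dlin d j₀ s) := by
      rw [hw, add_comm j₀ i, inv_smul_smul₀ (omg_ne_zero d _)]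
    show Dlin d (j₀ + i) s ∈ _
    rw [this]
    exact Submodule.smul_mem _ _ (Submodule.subset_span ⟨j₀, hj₀, rfl⟩)
  · rintro x ⟨j, hj, rfl⟩
    have hw := LinearMap.ext_iff.mp (Dlin_weyl d hodd i j) s
    simp only [LinearMap.comp_apply, LinearMap.smul_apply] at hw
    simp only [Function.comp_apply]
    rw [hw]
    refine Submodule.smul_mem _ _ (Submodule.subset_span ⟨j + i, ?_, by rw [add_comm]⟩)
    exact_mod_cast Finset.mem_image_of_mem _ (by exact_mod_cast hj)

lemma proj_congr {E : Type*} [NormedAddCommGroup E] [InnerProductSpace ℂ E]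
    [FiniteDimensional ℂ E] {K L : Submodule ℂ E} (h : K = L) :
    K.subtype ∘ₗ (Submodule.orthogonalProjection K).toLinearMap
      = L.subtype ∘ₗ (Submodule.orthogonalProjection L).toLinearMap := by subst h; rfl

lemma Proj_translate (hodd : Odd d) (s : EuclideanSpace ℂ (ZMod d))
    (A : Finset (ZMod d × ZMod d)) (i : ZMod d × ZMod d) :
    Proj d s (A.image (· + i))
      = Dlin d i ∘ₗ (Proj d s A ∘ₗ LinearMap.adjoint (Dlin d i)) := by
  unfold Proj
  rw [proj_congr (Hsub_translate d hodd s A i)]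
  exact proj_map (Dlin d i) (adjoint_comp_Dlin d i) (Hsub d s A)

lemma trace_Proj (a : ℕ) (s : EuclideanSpace ℂ (ZMod d)) (A : Finset (ZMod d × ZMod d))
    (hA : A.card = a)
    (hind : LinearIndependent ℂ (fun j : A => Dlin d (j : ZMod d × ZMod d) s)) :
    LinearMap.trace ℂ (EuclideanSpace ℂ (ZMod d)) (Proj d s A) = (a : ℂ) := by
  have hproj : LinearMap.IsProj (Hsub d s A) (Proj d s A) := by
    constructor
    · intro x
      exact (Submodule.orthogonalProjection (Hsub d s A) x).2
    · intro x hx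
      exact Submodule.starProjection_eq_self_iff.mpr hx
  rw [hproj.trace]
  congr 1
  have himg : (fun j => Dlin d j s) '' ↑A = Set.range (fun j : A => Dlin d (j : ZMod d × ZMod d) s) := by
    exact Set.image_eq_range _ _
  rw [Hsub, himg, finrank_span_eq_card hind, ← hA]
  exact Fintype.card_coe A


/-- Let `card A = a` with the coherent states `D(j)s`, `j ∈ A`, linearly
independent. Then (1) for every linear operator `θ` on `ℂ^d`,
`∑ i, Tr(θ ∘ Π(A+i)) = d · a · Tr θ`; and (2) if `θ = ∑ i, c i • Π(A+i)`, then
`Tr θ = a · ∑ i, c i`. -/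
theorem trace_Q_and_P_functions
    (d a : ℕ) [Fact d.Prime] (hodd : Odd d)
    (s : EuclideanSpace ℂ (ZMod d))
    (A : Finset (ZMod d × ZMod d)) (hA : A.card = a)
    (hind : LinearIndependent ℂ (fun j : A => Dlin d (j : ZMod d × ZMod d) s)) :
    (∀ θ : EuclideanSpace ℂ (ZMod d) →ₗ[ℂ] EuclideanSpace ℂ (ZMod d),
      ∑ i : ZMod d × ZMod d,
          LinearMap.trace ℂ (EuclideanSpace ℂ (ZMod d)) (θ ∘ₗ Proj d s (A.image (· + i)))
        = (d : ℂ) * (a : ℂ) * LinearMap.trace ℂ (EuclideanSpace ℂ (ZMod d)) θ) ∧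
    (∀ (c : ZMod d × ZMod d → ℂ)
        (θ : EuclideanSpace ℂ (ZMod d) →ₗ[ℂ] EuclideanSpace ℂ (ZMod d)),
      θ = ∑ i : ZMod d × ZMod d, c i • Proj d s (A.image (· + i)) →
      LinearMap.trace ℂ (EuclideanSpace ℂ (ZMod d)) θ
        = (a : ℂ) * ∑ i : ZMod d × ZMod d, c i) := by
  have htrP : ∀ i : ZMod d × ZMod d,
      LinearMap.trace ℂ (EuclideanSpace ℂ (ZMod d)) (Proj d s (A.image (· + i))) = (a : ℂ) := by
    intro i
    rw [Proj_translate d hodd s A i, LinearMap.trace_comp_comm', LinearMap.comp_assoc,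
      adjoint_comp_Dlin, LinearMap.comp_id]
    exact trace_Proj d a s A hA hind
  constructor
  · intro θ
    obtain ⟨M₀, hM₀⟩ := Matrix.toEuclideanLin.surjective (Proj d s A)
    have htrM₀ : M₀.trace = (a : ℂ) := by
      rw [← trace_toEuclideanLin, hM₀]
      exact trace_Proj d a s A hA hind
    have hPi : ∀ i : ZMod d × ZMod d,
        Proj d s (A.image (· + i)) = Matrix.toEuclideanLin (Dmat d i * M₀ * (Dmat d i)ᴴ) := by
      intro i
      rw [toEuclideanLin_comp, toEuclideanLin_comp, hM₀, Proj_translate d hodd s A i,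
        ← Dlin, ← Dlin_adjoint, LinearMap.comp_assoc]
    have hsum : ∑ i : ZMod d × ZMod d, Proj d s (A.image (· + i))
        = ((d : ℂ) * (a : ℂ)) • LinearMap.id := by
      rw [Finset.sum_congr rfl (fun i _ => hPi i), ← map_sum, Dmat_conj_sum, htrM₀, map_smul]
      congr 1
      rw [Matrix.toEuclideanLin_eq_toLin, Matrix.toLin_one]
    have hc : ∑ i : ZMod d × ZMod d, θ ∘ₗ Proj d s (A.image (· + i))
        = θ ∘ₗ (((d : ℂ) * (a : ℂ)) • LinearMap.id) := by
      rw [← hsum]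
      exact (map_sum (LinearMap.llcomp ℂ (EuclideanSpace ℂ (ZMod d)) (EuclideanSpace ℂ (ZMod d)) (EuclideanSpace ℂ (ZMod d)) θ) _ Finset.univ).symm
    rw [← map_sum (LinearMap.trace ℂ (EuclideanSpace ℂ (ZMod d))), hc, LinearMap.comp_smul,
      LinearMap.comp_id, map_smul, smul_eq_mul]
  · intro c θ hθ
    rw [hθ, map_sum]
    have : ∀ i : ZMod d × ZMod d, LinearMap.trace ℂ (EuclideanSpace ℂ (ZMod d)) (c i • Proj d s (A.image (· + i)))
        = (a : ℂ) * c i := by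
      intro i
      rw [map_smul, htrP i, smul_eq_mul, mul_comm]
    rw [Finset.sum_congr rfl (fun i _ => this i), ← Finset.mul_sum]


end
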